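/- Let F₀ be the space of complex polynomials and F₁ ⋊_α sl₂ the Lie algebra with underlying space F₁ ⊕ sl₂(ℂ) and bracket [(a,y),(b,z)] = (y▷b − z▷a + α(y,z), [y,z]), where α(k,e) = −α(e,k) = dx and α vanishes on other basis pairs. Then: (1) this bracket satisfies the Jacobi identity (i.e., α is a 2-cocycle for the sl₂-action on F₁); (2) the map ∂ : F₀ → F₁ ⋊_α sl₂, ∂(p) = (dp, 0), together with the action (a,y) ▷ p = y ▷ p, defines a differential crossed module (the String differential crossed module); (3) ker(∂) = ℂ·1 is invariant under the action of F₁ ⋊_α sl₂. -/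

import Mathlib

/-!
Under `m`, traceless matrices become the quadratic vector fields `u d/dx`, and the matrix
commutator becomes the Witt bracket `u v' - u' v`, i.e. the Wronskian `W(u, v)`. The Lie
derivative on 1-forms is `q dx ↦ (u q)' dx`, and the identity `W(u, v) q = u (v q)' - v (u q)'`
makes it an action of vector fields. The cocycle is `α(u, v) = ½ W(u', v')`, and its cocycle
identity is a polynomial identity once `u''' = v''' = w''' = 0`. Together these give the Jacobi
identity of the twisted semidirect product. The image of `∂` has no `sl₂` part, which makes the
crossed module axioms immediate.
-/

open Polynomial

namespace Stmt13

/-- The embedding `sl₂(ℂ) → W₁`, `f ↦ d/dx`, `k ↦ x d/dx`, `e ↦ x² d/dx`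
(on the matrix model of `sl₂(ℂ)`), identifying `p(x) d/dx` with `p`. -/
noncomputable def m (A : Matrix (Fin 2) (Fin 2) ℂ) : Polynomial ℂ :=
  C (-(A 0 1)) + C (2 * A 1 1) * X + C (A 1 0) * X ^ 2

/-- The action of `sl₂ ⊂ W₁` on `F₀` (polynomials): `(p d/dx) ▷ q = p q'`. -/
noncomputable def actF0 (A : Matrix (Fin 2) (Fin 2) ℂ) (q : Polynomial ℂ) :
    Polynomial ℂ := m A * derivative q

/-- The action of `sl₂ ⊂ W₁` on `F₁` (polynomial 1-forms, `q dx ↔ q`):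
`(p d/dx) ▷ (q dx) = (p q' + p' q) dx`. -/
noncomputable def actF1 (A : Matrix (Fin 2) (Fin 2) ℂ) (q : Polynomial ℂ) :
    Polynomial ℂ := m A * derivative q + derivative (m A) * q

/-- The restriction to `sl₂` of the 2-cocycle `ᾱ`, satisfying
`α(k,e) = −α(e,k) = dx` and vanishing on the other basis pairs. -/
noncomputable def alpha (A B : Matrix (Fin 2) (Fin 2) ℂ) : Polynomial ℂ :=
  ((1 : ℂ)/2) • (derivative (m A) * derivative (derivative (m B))
    - derivative (derivative (m A)) * derivative (m B))

/-- The bracket of `F₁ ⋊_α sl₂` (underlying space `F₁ ⊕ sl₂`):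
`[(a,y),(b,z)] = (y▷b − z▷a + α(y,z), [y,z])`. -/
noncomputable def br (p q : Polynomial ℂ × Matrix (Fin 2) (Fin 2) ℂ) :
    Polynomial ℂ × Matrix (Fin 2) (Fin 2) ℂ :=
  (actF1 p.2 q.1 - actF1 q.2 p.1 + alpha p.2 q.2, ⁅p.2, q.2⁆)

/-- The map `∂ : F₀ → F₁ ⋊_α sl₂`, `∂(p) = (dp, 0)`. -/
noncomputable def dd (p : Polynomial ℂ) :
    Polynomial ℂ × Matrix (Fin 2) (Fin 2) ℂ := (derivative p, 0)

/-- The action of `F₁ ⋊_α sl₂` on `F₀`: `(a,y) ▷ p = y ▷ p`. -/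
noncomputable def actE (a : Polynomial ℂ × Matrix (Fin 2) (Fin 2) ℂ)
    (p : Polynomial ℂ) : Polynomial ℂ := actF0 a.2 p

section Wronskian

variable {R : Type*} [CommRing R]

theorem derivative_wronskian_mul (u v q : R[X]) :
    derivative (wronskian u v * q) =
      derivative (u * derivative (v * q)) - derivative (v * derivative (u * q)) := by
  rw [← derivative_sub]
  congr 1
  simp only [wronskian, derivative_mul]
  ring

theorem wronskian_derivative_cocycle {u v w : R[X]}
    (hu : derivative (derivative (derivative u)) = 0)
    (hv : derivative (derivative (derivative v)) = 0)
    (hw : derivative (derivative (derivative w)) = 0) :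
    derivative (u * wronskian (derivative v) (derivative w))
      + derivative (v * wronskian (derivative w) (derivative u))
      + derivative (w * wronskian (derivative u) (derivative v))
      + wronskian (derivative u) (derivative (wronskian v w))
      + wronskian (derivative v) (derivative (wronskian w u))
      + wronskian (derivative w) (derivative (wronskian u v)) = 0 := by
  simp only [wronskian, derivative_mul, derivative_add, derivative_sub, hu, hv, hw]
  ring

end Wronskian

theorem derivative_derivative_m (A : Matrix (Fin 2) (Fin 2) ℂ) :
    derivative (derivative (m A)) = C (2 * A 1 0) := by
  rw [C_mul, map_ofNat C 2]
  simp only [m, map_neg, map_mul, derivative_C, neg_zero, derivative_mul, zero_mul, mul_zero,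
    add_zero, derivative_X, mul_one, zero_add, derivative_X_pow_succ, Nat.cast_one, map_add,
    map_one, pow_one, derivative_one]
  ring

theorem m_zero : m 0 = 0 := by simp [m]

theorem m_lie {A B : Matrix (Fin 2) (Fin 2) ℂ} (hA : A.trace = 0) (hB : B.trace = 0) :
    m ⁅A, B⁆ = wronskian (m A) (m B) := by
  simp only [Matrix.trace, Fin.sum_univ_two, Matrix.diag_apply] at hA hB
  have hA' : A 0 0 = -A 1 1 := by linear_combination hA
  have hB' : B 0 0 = -B 1 1 := by linear_combination hB
  have hC2 : (C (2 : ℂ)) = 2 := map_ofNat C 2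
  simp only [m, Ring.lie_def, Matrix.sub_apply, Matrix.mul_apply, Fin.sum_univ_two, hA', hB', hC2,
    wronskian, neg_mul, neg_sub, map_sub, map_add, map_neg, map_mul, mul_neg, derivative_C,
    neg_zero, derivative_mul, derivative_ofNat, zero_mul, mul_zero, add_zero, derivative_X,
    mul_one, zero_add, derivative_X_pow_succ, Nat.cast_one, map_one, pow_one]
  ring

theorem actF1_eq_derivative (A : Matrix (Fin 2) (Fin 2) ℂ) (q : ℂ[X]) :
    actF1 A q = derivative (m A * q) := by
  rw [actF1, derivative_mul, add_comm]

theorem alpha_eq_wronskian (A B : Matrix (Fin 2) (Fin 2) ℂ) :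
    alpha A B = C (1 / 2) * wronskian (derivative (m A)) (derivative (m B)) := by
  rw [alpha, smul_eq_C_mul, wronskian]

theorem actF1_add (A : Matrix (Fin 2) (Fin 2) ℂ) (p q : ℂ[X]) :
    actF1 A (p + q) = actF1 A p + actF1 A q := by
  simp only [actF1_eq_derivative, mul_add, derivative_add]

theorem actF1_sub (A : Matrix (Fin 2) (Fin 2) ℂ) (p q : ℂ[X]) :
    actF1 A (p - q) = actF1 A p - actF1 A q := by
  simp only [actF1_eq_derivative, mul_sub, derivative_sub]

theorem actF1_lie {A B : Matrix (Fin 2) (Fin 2) ℂ} (hA : A.trace = 0) (hB : B.trace = 0)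
    (q : ℂ[X]) : actF1 ⁅A, B⁆ q = actF1 A (actF1 B q) - actF1 B (actF1 A q) := by
  simp only [actF1_eq_derivative, m_lie hA hB, derivative_wronskian_mul]

theorem alpha_cocycle {A B D : Matrix (Fin 2) (Fin 2) ℂ}
    (hA : A.trace = 0) (hB : B.trace = 0) (hD : D.trace = 0) :
    actF1 A (alpha B D) + actF1 B (alpha D A) + actF1 D (alpha A B)
      + alpha A ⁅B, D⁆ + alpha B ⁅D, A⁆ + alpha D ⁅A, B⁆ = 0 := by
  have h3 (E : Matrix (Fin 2) (Fin 2) ℂ) : derivative (derivative (derivative (m E))) = 0 := by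
    rw [derivative_derivative_m, derivative_C]
  simp only [actF1_eq_derivative, alpha_eq_wronskian, m_lie hA hB, m_lie hB hD, m_lie hD hA,
    mul_left_comm (m _) (C _), derivative_C_mul]
  linear_combination C (1 / 2 : ℂ) * wronskian_derivative_cocycle (h3 A) (h3 B) (h3 D)

section

attribute [local instance] LieRing.ofAssociativeRing

theorem br_jacobi {p q r : ℂ[X] × Matrix (Fin 2) (Fin 2) ℂ}
    (hp : p.2.trace = 0) (hq : q.2.trace = 0) (hr : r.2.trace = 0) :
    br p (br q r) + br q (br r p) + br r (br p q) = 0 := by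
  refine Prod.ext ?_ (lie_jacobi p.2 q.2 r.2)
  simp only [br, Prod.fst_add, Prod.fst_zero, actF1_add, actF1_sub, actF1_lie hp hq,
    actF1_lie hq hr, actF1_lie hr hp]
  linear_combination alpha_cocycle hp hq hr

theorem dd_actE (a : ℂ[X] × Matrix (Fin 2) (Fin 2) ℂ) (p : ℂ[X]) :
    dd (actE a p) = br a (dd p) := by
  refine Prod.ext ?_ (lie_zero a.2).symm
  simp [dd, actE, actF0, br, actF1_eq_derivative, alpha, m_zero]

end

theorem actE_dd (p q : ℂ[X]) : actE (dd p) q = 0 := by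
  simp [actE, dd, actF0, m_zero]

/-- The String differential crossed module `∂ : F₀ → F₁ ⋊_α sl₂`:
(1) the bracket of `F₁ ⋊_α sl₂` satisfies the Jacobi identity;
(2) `∂(p) = (dp, 0)` with the action `(a,y) ▷ p = y ▷ p` is a differential
crossed module (equivariance of `∂` and the Peiffer relation, the latter
trivial since `F₀` is abelian);
(3) `ker ∂ = ℂ·1` and it is invariant under the action of `F₁ ⋊_α sl₂`. -/
theorem string_differential_crossed_module :
    -- (1) Jacobi identity:
    (∀ p q r : Polynomial ℂ × Matrix (Fin 2) (Fin 2) ℂ,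
      p.2.trace = 0 → q.2.trace = 0 → r.2.trace = 0 →
      br p (br q r) + br q (br r p) + br r (br p q) = 0) ∧
    -- (2) equivariance of `∂` ...
    (∀ (a : Polynomial ℂ × Matrix (Fin 2) (Fin 2) ℂ) (p : Polynomial ℂ),
      a.2.trace = 0 → dd (actE a p) = br a (dd p)) ∧
    -- ... and the Peiffer relation (`F₀` abelian):
    (∀ p q : Polynomial ℂ, actE (dd p) q = 0) ∧
    -- (3) `ker ∂ = ℂ·1` ...
    (∀ p : Polynomial ℂ, derivative p = 0 ↔ ∃ c : ℂ, p = C c) ∧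
    -- ... is invariant under the action:
    (∀ (a : Polynomial ℂ × Matrix (Fin 2) (Fin 2) ℂ) (p : Polynomial ℂ),
      a.2.trace = 0 → derivative p = 0 → derivative (actE a p) = 0) :=
  ⟨fun _ _ _ => br_jacobi, fun a p _ => dd_actE a p, actE_dd,
    fun _ => derivative_eq_zero.trans <| natDegree_eq_zero.trans <| exists_congr fun _ => eq_comm,
    fun a p _ hp => by simp [actE, actF0, hp]⟩

end Stmt13
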